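/- arXiv:2012.09549 — 2 statements merged into one kernel-verified Lean document; each statement's English description precedes it below -/
import Mathlib

section
/- For the 1-dimensional Neumann heat kernel on (0,1), given by the eigenfunction expansion G_t(x,y) = 1 + ∑_{n≥1} 2 e^{-n²π²t} cos(nπx) cos(nπy), there exists a constant C > 0 such that for all t > 0 and all x, y ∈ [0,1], ∫₀¹ (G_t(x,ξ) − G_t(y,ξ))² dξ ≤ C |x−y|² / t^{3/2}. -/
/-!
Write `G_t(x,·) - G_t(y,·)` as the cosine series `∑ aₙ cos((n+1)πξ)` with
`aₙ = 2 e^{-(n+1)²π²t} (cos((n+1)πx) - cos((n+1)πy))`. The cosines are orthogonal on `[0,1]`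
with squared norm `1/2` and the coefficients are absolutely summable, so dominated convergence
gives Parseval: the integral equals `∑ aₙ² / 2`. Since `cos` is 1-Lipschitz,
`aₙ² ≤ 4π²|x-y|² (n+1)² e^{-2π²t(n+1)²}`, and `∑ k² e^{-ck²} = O(c^{-3/2})`: bound
`k² e^{-ck²/2} ≤ 2/(ce)` and compare `∑ e^{-ck²/2}` with the Gaussian integral over `(0,∞)`.
-/

open MeasureTheory Real Filter

/-- Neumann heat kernel on (0,1), via its eigenfunction expansion. -/
noncomputable def NeumannHeatKernel (t x y : ℝ) : ℝ :=
  1 + ∑' n : ℕ, 2 * Real.exp (-((n + 1 : ℝ) ^ 2) * Real.pi ^ 2 * t) *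
      Real.cos ((n + 1 : ℝ) * Real.pi * x) * Real.cos ((n + 1 : ℝ) * Real.pi * y)

section GaussianSums

variable {c : ℝ}

theorem sum_range_exp_neg_mul_sq_le (hc : 0 < c) (N : ℕ) :
    ∑ i ∈ Finset.range N, exp (-(c * ((i : ℝ) + 1) ^ 2)) ≤ √(π / c) / 2 := by
  have hanti : AntitoneOn (fun s : ℝ => exp (-c * s ^ 2)) (Set.Icc 0 (0 + N)) := by
    intro s hs r _ hsr
    have : s ^ 2 ≤ r ^ 2 := pow_le_pow_left₀ hs.1 hsr 2
    exact exp_le_exp.2 (by nlinarith)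
  calc ∑ i ∈ Finset.range N, exp (-(c * ((i : ℝ) + 1) ^ 2))
      = ∑ i ∈ Finset.range N, exp (-c * ((0 : ℝ) + (i + 1 : ℕ)) ^ 2) := by
        push_cast; simp only [zero_add, neg_mul]
    _ ≤ ∫ s in (0 : ℝ)..0 + N, exp (-c * s ^ 2) := hanti.sum_le_integral
    _ ≤ ∫ s in Set.Ioi 0, exp (-c * s ^ 2) := by
        rw [intervalIntegral.integral_of_le (by positivity)]
        exact setIntegral_mono_set (integrableOn_Ioi_exp_neg_mul_sq_iff.2 hc)
          (.of_forall fun _ => (exp_pos _).le) (.of_forall Set.Ioc_subset_Ioi_self)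
    _ = √(π / c) / 2 := integral_gaussian_Ioi c

theorem summable_exp_neg_mul_sq (hc : 0 < c) :
    Summable fun n : ℕ => exp (-(c * ((n : ℝ) + 1) ^ 2)) :=
  summable_of_sum_range_le (fun _ => (exp_pos _).le) (sum_range_exp_neg_mul_sq_le hc)

theorem tsum_exp_neg_mul_sq_le (hc : 0 < c) :
    ∑' n : ℕ, exp (-(c * ((n : ℝ) + 1) ^ 2)) ≤ √(π / c) / 2 :=
  Real.tsum_le_of_sum_range_le (fun _ => (exp_pos _).le) (sum_range_exp_neg_mul_sq_le hc)

theorem sq_mul_exp_neg_mul_sq_le (hc : 0 < c) (s : ℝ) :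
    s ^ 2 * exp (-(c * s ^ 2)) ≤ 2 / (c * exp 1) * exp (-(c / 2 * s ^ 2)) := by
  have hye := mul_exp_neg_le_exp_neg_one (c / 2 * s ^ 2)
  have hsplit : exp (-(c * s ^ 2)) = exp (-(c / 2 * s ^ 2)) * exp (-(c / 2 * s ^ 2)) := by
    rw [← exp_add]; ring_nf
  calc s ^ 2 * exp (-(c * s ^ 2))
      = 2 / c * (c / 2 * s ^ 2 * exp (-(c / 2 * s ^ 2))) * exp (-(c / 2 * s ^ 2)) := by
        rw [hsplit]; field_simp
    _ ≤ 2 / c * exp (-1) * exp (-(c / 2 * s ^ 2)) := by gcongr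
    _ = 2 / (c * exp 1) * exp (-(c / 2 * s ^ 2)) := by rw [exp_neg]; field_simp

theorem summable_sq_mul_exp_neg_mul_sq (hc : 0 < c) :
    Summable fun n : ℕ => ((n : ℝ) + 1) ^ 2 * exp (-(c * ((n : ℝ) + 1) ^ 2)) :=
  .of_nonneg_of_le (fun _ => by positivity) (fun n => sq_mul_exp_neg_mul_sq_le hc _)
    ((summable_exp_neg_mul_sq (half_pos hc)).mul_left _)

theorem tsum_sq_mul_exp_neg_mul_sq_le (hc : 0 < c) :
    ∑' n : ℕ, ((n : ℝ) + 1) ^ 2 * exp (-(c * ((n : ℝ) + 1) ^ 2)) ≤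
      √(2 * π) / (exp 1 * c ^ ((3 : ℝ) / 2)) := by
  have hc2 := half_pos hc
  calc ∑' n : ℕ, ((n : ℝ) + 1) ^ 2 * exp (-(c * ((n : ℝ) + 1) ^ 2))
      ≤ ∑' n : ℕ, 2 / (c * exp 1) * exp (-(c / 2 * ((n : ℝ) + 1) ^ 2)) :=
        (summable_sq_mul_exp_neg_mul_sq hc).tsum_le_tsum (fun n => sq_mul_exp_neg_mul_sq_le hc _)
          ((summable_exp_neg_mul_sq hc2).mul_left _)
    _ = 2 / (c * exp 1) * ∑' n : ℕ, exp (-(c / 2 * ((n : ℝ) + 1) ^ 2)) := tsum_mul_left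
    _ ≤ 2 / (c * exp 1) * (√(π / (c / 2)) / 2) := by gcongr; exact tsum_exp_neg_mul_sq_le hc2
    _ = √(2 * π) / (exp 1 * c ^ ((3 : ℝ) / 2)) := by
        rw [show (3 : ℝ) / 2 = 1 + 1 / 2 by norm_num, rpow_add hc, rpow_one, ← sqrt_eq_rpow,
          show π / (c / 2) = 2 * π / c by ring, sqrt_div' _ hc.le]
        field_simp

end GaussianSums

section Parseval

variable {a b : ℝ}

theorem hasSum_intervalIntegral_of_abs_le {ι : Type*} [Countable ι] {F : ι → ℝ → ℝ} {M : ι → ℝ}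
    (hF : ∀ n, Continuous (F n)) (hM : Summable M) (hFM : ∀ n x, |F n x| ≤ M n) :
    HasSum (fun n => ∫ x in a..b, F n x) (∫ x in a..b, ∑' n, F n x) :=
  intervalIntegral.hasSum_integral_of_dominated_convergence (fun n _ => M n)
    (fun n => (hF n).aestronglyMeasurable) (fun n => .of_forall fun x _ => hFM n x)
    (.of_forall fun _ _ => hM) intervalIntegrable_const
    (.of_forall fun x _ => (hM.of_norm_bounded fun n => hFM n x).hasSum)

variable {φ : ℕ → ℝ → ℝ} {α : ℕ → ℝ}

theorem abs_tsum_mul_le (hφ1 : ∀ n ξ, |φ n ξ| ≤ 1) (hα : Summable fun n => |α n|) (ξ : ℝ) :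
    |∑' n, α n * φ n ξ| ≤ ∑' n, |α n| := by
  have hterm : ∀ n, ‖α n * φ n ξ‖ ≤ |α n| := fun n => by
    rw [norm_mul]; exact mul_le_of_le_one_right (abs_nonneg _) (hφ1 n ξ)
  exact (norm_tsum_le_tsum_norm (hα.of_nonneg_of_le (fun _ => norm_nonneg _) hterm)).trans
    ((hα.of_nonneg_of_le (fun _ => norm_nonneg _) hterm).tsum_le_tsum hterm hα)

theorem hasSum_integral_tsum_mul (hφ : ∀ n, Continuous (φ n)) (hφ1 : ∀ n ξ, |φ n ξ| ≤ 1)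
    (hα : Summable fun n => |α n|) {g : ℝ → ℝ} (hg : Continuous g) {B : ℝ}
    (hgB : ∀ ξ, |g ξ| ≤ B) :
    HasSum (fun n => α n * ∫ ξ in a..b, φ n ξ * g ξ)
      (∫ ξ in a..b, (∑' n, α n * φ n ξ) * g ξ) := by
  have h := hasSum_intervalIntegral_of_abs_le (a := a) (b := b)
    (F := fun n ξ => α n * (φ n ξ * g ξ)) (M := fun n => |α n| * B)
    (fun n => continuous_const.mul ((hφ n).mul hg)) (hα.mul_right B) fun n ξ => by
      rw [abs_mul, abs_mul]
      gcongr
      simpa using mul_le_mul (hφ1 n ξ) (hgB ξ) (abs_nonneg _) zero_le_one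
  simp only [intervalIntegral.integral_const_mul] at h
  convert h using 3 with ξ
  rw [← tsum_mul_right]
  exact tsum_congr fun n => mul_assoc _ _ _

theorem integral_sq_tsum_of_orthogonal (hφ : ∀ n, Continuous (φ n))
    (hφ1 : ∀ n ξ, |φ n ξ| ≤ 1) {c : ℝ}
    (horth : ∀ m n, ∫ ξ in a..b, φ m ξ * φ n ξ = if m = n then c else 0)
    (hα : Summable fun n => |α n|) :
    ∫ ξ in a..b, (∑' n, α n * φ n ξ) ^ 2 = c * ∑' n, α n ^ 2 := by
  set f := fun ξ => ∑' n, α n * φ n ξ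
  have hf : Continuous f :=
    continuous_tsum (fun n => continuous_const.mul (hφ n)) hα fun n ξ => by
      rw [norm_mul]; exact mul_le_of_le_one_right (abs_nonneg _) (hφ1 n ξ)
  have hcoeff : ∀ n, ∫ ξ in a..b, φ n ξ * f ξ = c * α n := by
    intro n
    have h := hasSum_integral_tsum_mul hφ hφ1 hα (hφ n) (hφ1 n) (a := a) (b := b)
    simp only [horth, mul_ite, mul_zero] at h
    simp only [mul_comm (φ n _)]
    rw [← h.tsum_eq, tsum_eq_single n fun m hm => if_neg hm, if_pos rfl, mul_comm]
  have h := hasSum_integral_tsum_mul hφ hφ1 hα hf (abs_tsum_mul_le hφ1 hα) (a := a) (b := b)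
  simp only [hcoeff] at h
  rw [← tsum_mul_left]
  simp only [sq]
  rw [← h.tsum_eq]
  exact tsum_congr fun n => by ring

end Parseval

theorem integral_cos_int_mul_pi (k : ℤ) :
    ∫ ξ in (0 : ℝ)..1, cos (k * π * ξ) = if k = 0 then 1 else 0 := by
  rcases eq_or_ne k 0 with rfl | hk
  · simp
  · have hkπ : (k : ℝ) * π ≠ 0 := mul_ne_zero (Int.cast_ne_zero.2 hk) pi_ne_zero
    rw [intervalIntegral.integral_comp_mul_left cos hkπ, integral_cos]
    simp [hk, sin_int_mul_pi]

noncomputable def neumannMode (n : ℕ) (ξ : ℝ) : ℝ := cos ((n + 1 : ℝ) * π * ξ)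

theorem continuous_neumannMode (n : ℕ) : Continuous (neumannMode n) := by
  unfold neumannMode; fun_prop

theorem abs_neumannMode_le_one (n : ℕ) (ξ : ℝ) : |neumannMode n ξ| ≤ 1 := abs_cos_le_one _

theorem integral_neumannMode_mul_neumannMode (m n : ℕ) :
    ∫ ξ in (0 : ℝ)..1, neumannMode m ξ * neumannMode n ξ = if m = n then 1 / 2 else 0 := by
  have hint : ∀ k : ℤ, IntervalIntegrable (fun ξ : ℝ => cos (k * π * ξ)) volume 0 1 :=
    fun k => (by fun_prop : Continuous fun ξ : ℝ => cos (k * π * ξ)).intervalIntegrable 0 1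
  have hprod : ∀ ξ, neumannMode m ξ * neumannMode n ξ =
      (cos (((m + n + 2 : ℕ) : ℤ) * π * ξ) + cos (((m : ℤ) - n : ℤ) * π * ξ)) / 2 := by
    intro ξ
    have hsum : (((m + n + 2 : ℕ) : ℤ) : ℝ) * π * ξ = (m + 1) * π * ξ + (n + 1) * π * ξ := by
      push_cast; ring
    have hdiff : (((m : ℤ) - n : ℤ) : ℝ) * π * ξ = (m + 1) * π * ξ - (n + 1) * π * ξ := by
      push_cast; ring
    rw [hsum, hdiff, cos_add, cos_sub, neumannMode, neumannMode]
    ring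
  simp only [hprod]
  rw [intervalIntegral.integral_div, intervalIntegral.integral_add (hint _) (hint _),
    integral_cos_int_mul_pi, integral_cos_int_mul_pi]
  have hpos : (m : ℤ) + n + 2 ≠ 0 := by omega
  rcases eq_or_ne m n with rfl | hmn
  · norm_num [hpos]
  · simp [hpos, hmn, sub_eq_zero]

section NeumannHeatKernel

variable {t : ℝ}

theorem exp_neg_sq_mul_pi_sq_mul (t : ℝ) (n : ℕ) :
    exp (-((n + 1 : ℝ) ^ 2) * π ^ 2 * t) = exp (-(π ^ 2 * t * ((n : ℝ) + 1) ^ 2)) := by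
  ring_nf

theorem summable_neumannHeatKernel_term (ht : 0 < t) (x y : ℝ) :
    Summable fun n : ℕ => 2 * exp (-((n + 1 : ℝ) ^ 2) * π ^ 2 * t) *
      cos ((n + 1 : ℝ) * π * x) * cos ((n + 1 : ℝ) * π * y) := by
  refine ((summable_exp_neg_mul_sq (c := π ^ 2 * t) (by positivity)).mul_left 2).of_norm_bounded
    fun n => ?_
  rw [norm_mul, norm_mul, norm_mul, exp_neg_sq_mul_pi_sq_mul, norm_of_nonneg (exp_pos _).le]
  calc _ ≤ ‖(2 : ℝ)‖ * exp (-(π ^ 2 * t * ((n : ℝ) + 1) ^ 2)) * 1 * 1 := by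
        gcongr <;> exact abs_cos_le_one _
    _ = 2 * exp (-(π ^ 2 * t * ((n : ℝ) + 1) ^ 2)) := by norm_num

noncomputable def neumannCoeffDiff (t x y : ℝ) (n : ℕ) : ℝ :=
  2 * exp (-((n + 1 : ℝ) ^ 2) * π ^ 2 * t) * (neumannMode n x - neumannMode n y)

theorem neumannHeatKernel_sub_eq_tsum (ht : 0 < t) (x y ξ : ℝ) :
    NeumannHeatKernel t x ξ - NeumannHeatKernel t y ξ =
      ∑' n, neumannCoeffDiff t x y n * neumannMode n ξ := by
  rw [NeumannHeatKernel, NeumannHeatKernel, add_sub_add_left_eq_sub,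
    ← (summable_neumannHeatKernel_term ht x ξ).tsum_sub (summable_neumannHeatKernel_term ht y ξ)]
  exact tsum_congr fun n => by rw [neumannCoeffDiff, neumannMode, neumannMode, neumannMode]; ring

theorem abs_neumannCoeffDiff_le (t x y : ℝ) (n : ℕ) :
    |neumannCoeffDiff t x y n| ≤
      2 * π * |x - y| * (((n : ℝ) + 1) * exp (-(π ^ 2 * t * ((n : ℝ) + 1) ^ 2))) := by
  have hcos : |neumannMode n x - neumannMode n y| ≤ ((n : ℝ) + 1) * π * |x - y| := by
    refine (abs_cos_sub_cos_le _ _).trans_eq ?_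
    rw [← mul_sub, abs_mul, abs_of_pos (by positivity : (0 : ℝ) < (n + 1) * π)]
  rw [neumannCoeffDiff, abs_mul, abs_mul, abs_two, abs_of_pos (exp_pos _),
    exp_neg_sq_mul_pi_sq_mul]
  calc 2 * exp (-(π ^ 2 * t * ((n : ℝ) + 1) ^ 2)) * |neumannMode n x - neumannMode n y|
      ≤ 2 * exp (-(π ^ 2 * t * ((n : ℝ) + 1) ^ 2)) * (((n : ℝ) + 1) * π * |x - y|) := by gcongr
    _ = 2 * π * |x - y| * (((n : ℝ) + 1) * exp (-(π ^ 2 * t * ((n : ℝ) + 1) ^ 2))) := by ring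

theorem summable_abs_neumannCoeffDiff (ht : 0 < t) (x y : ℝ) :
    Summable fun n => |neumannCoeffDiff t x y n| := by
  refine .of_nonneg_of_le (fun _ => abs_nonneg _) (abs_neumannCoeffDiff_le t x y)
    (((summable_sq_mul_exp_neg_mul_sq (c := π ^ 2 * t) (by positivity)).of_nonneg_of_le
      (fun _ => by positivity) fun n => ?_).mul_left _)
  have h1 : (1 : ℝ) ≤ n + 1 := by simp
  gcongr
  nlinarith

theorem sq_neumannCoeffDiff_le (t x y : ℝ) (n : ℕ) :
    neumannCoeffDiff t x y n ^ 2 ≤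
      4 * π ^ 2 * (x - y) ^ 2 *
        (((n : ℝ) + 1) ^ 2 * exp (-(2 * π ^ 2 * t * ((n : ℝ) + 1) ^ 2))) := by
  have hexp : exp (-(2 * π ^ 2 * t * ((n : ℝ) + 1) ^ 2)) =
      exp (-(π ^ 2 * t * ((n : ℝ) + 1) ^ 2)) ^ 2 := by
    rw [← exp_nat_mul]; ring_nf
  rw [← sq_abs, ← sq_abs (x - y), hexp]
  calc |neumannCoeffDiff t x y n| ^ 2
      ≤ (2 * π * |x - y| * (((n : ℝ) + 1) * exp (-(π ^ 2 * t * ((n : ℝ) + 1) ^ 2)))) ^ 2 := by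
        gcongr; exact abs_neumannCoeffDiff_le t x y n
    _ = _ := by ring

theorem tsum_sq_neumannCoeffDiff_le (ht : 0 < t) (x y : ℝ) :
    ∑' n, neumannCoeffDiff t x y n ^ 2 ≤
      4 * π ^ 2 * (x - y) ^ 2 * (√(2 * π) / (exp 1 * (2 * π ^ 2 * t) ^ ((3 : ℝ) / 2))) := by
  have hc : 0 < 2 * π ^ 2 * t := by positivity
  have hsum := (summable_sq_mul_exp_neg_mul_sq hc).mul_left (4 * π ^ 2 * (x - y) ^ 2)
  calc ∑' n, neumannCoeffDiff t x y n ^ 2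
      ≤ ∑' n : ℕ, 4 * π ^ 2 * (x - y) ^ 2 *
          (((n : ℝ) + 1) ^ 2 * exp (-(2 * π ^ 2 * t * ((n : ℝ) + 1) ^ 2))) :=
        (hsum.of_nonneg_of_le (fun _ => sq_nonneg _) (sq_neumannCoeffDiff_le t x y)).tsum_le_tsum
          (sq_neumannCoeffDiff_le t x y) hsum
    _ = 4 * π ^ 2 * (x - y) ^ 2 *
          ∑' n : ℕ, ((n : ℝ) + 1) ^ 2 * exp (-(2 * π ^ 2 * t * ((n : ℝ) + 1) ^ 2)) :=
        tsum_mul_left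
    _ ≤ _ := by gcongr; exact tsum_sq_mul_exp_neg_mul_sq_le hc

theorem integral_sq_neumannHeatKernel_sub (ht : 0 < t) (x y : ℝ) :
    ∫ ξ in (0 : ℝ)..1, (NeumannHeatKernel t x ξ - NeumannHeatKernel t y ξ) ^ 2 =
      1 / 2 * ∑' n, neumannCoeffDiff t x y n ^ 2 := by
  simp only [neumannHeatKernel_sub_eq_tsum ht]
  exact integral_sq_tsum_of_orthogonal continuous_neumannMode abs_neumannMode_le_one
    integral_neumannMode_mul_neumannMode (summable_abs_neumannCoeffDiff ht x y)

end NeumannHeatKernel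

theorem stmt_0 :
    ∃ C > 0, ∀ t : ℝ, 0 < t → ∀ x ∈ Set.Icc (0:ℝ) 1, ∀ y ∈ Set.Icc (0:ℝ) 1,
      ∫ ξ in (0:ℝ)..1, (NeumannHeatKernel t x ξ - NeumannHeatKernel t y ξ) ^ 2 ≤
        C * |x - y| ^ 2 / t ^ ((3:ℝ)/2) := by
  refine ⟨2 * π ^ 2 * √(2 * π) / (exp 1 * (2 * π ^ 2) ^ ((3 : ℝ) / 2)), by positivity, ?_⟩
  intro t ht x _ y _
  rw [integral_sq_neumannHeatKernel_sub ht]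
  calc 1 / 2 * ∑' n, neumannCoeffDiff t x y n ^ 2
      ≤ 1 / 2 * (4 * π ^ 2 * (x - y) ^ 2 *
          (√(2 * π) / (exp 1 * (2 * π ^ 2 * t) ^ ((3 : ℝ) / 2)))) := by
        gcongr; exact tsum_sq_neumannCoeffDiff_le ht x y
    _ = _ := by
        rw [mul_rpow (by positivity) ht.le, sq_abs]
        field_simp
        ring
end

section
/- For any 0 < T₁ < T₂ there exists a constant C = C(T₁,T₂) such that for all s, t ∈ [T₁, T₂] and all x ∈ [0,1], ∫₀¹ (G_t(x,ξ) − G_s(x,ξ))² dξ ≤ C |t−s|^{1/2}, where G is the Neumann heat kernel on (0,1). -/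
open MeasureTheory Real Filter

/-- coefficient sequence -/
noncomputable def nhkCoef (T₁ : ℝ) (n : ℕ) : ℝ :=
  2 * (((n : ℝ) + 1) * Real.pi) * Real.exp (-(((n : ℝ) + 1) ^ 2) * Real.pi ^ 2 * T₁)

lemma nhk_exp_le (τ T₁ : ℝ) (hT₁ : 0 < T₁) (hτ : T₁ ≤ τ) (n : ℕ) :
    Real.exp (-(((n : ℝ) + 1) ^ 2) * Real.pi ^ 2 * τ) ≤
      Real.exp (-(Real.pi ^ 2 * T₁)) ^ (n + 1) := by
  have hpi : (0:ℝ) < Real.pi ^ 2 := by positivity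
  have h1 : ((n : ℝ) + 1) ≤ ((n : ℝ) + 1) ^ 2 := by nlinarith [Nat.cast_nonneg (α := ℝ) n]
  have h2 : -(((n : ℝ) + 1) ^ 2) * Real.pi ^ 2 * τ ≤ ((n : ℕ) + 1 : ℕ) * (-(Real.pi ^ 2 * T₁)) := by
    push_cast
    have hτ' : Real.pi ^ 2 * T₁ ≤ Real.pi ^ 2 * τ := by nlinarith
    have key : ((n:ℝ)+1) * (Real.pi ^ 2 * T₁) ≤ ((n:ℝ)+1) ^ 2 * (Real.pi ^ 2 * τ) :=
      le_trans (mul_le_mul_of_nonneg_right h1 (by positivity))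
        (mul_le_mul_of_nonneg_left hτ' (by positivity))
    nlinarith [key]
  calc Real.exp (-(((n : ℝ) + 1) ^ 2) * Real.pi ^ 2 * τ)
      ≤ Real.exp (((n : ℕ) + 1 : ℕ) * (-(Real.pi ^ 2 * T₁))) := Real.exp_le_exp.2 h2
    _ = Real.exp (-(Real.pi ^ 2 * T₁)) ^ (n + 1) := Real.exp_nat_mul _ _

lemma nhkCoef_summable (T₁ : ℝ) (hT₁ : 0 < T₁) : Summable (nhkCoef T₁) := by
  set r : ℝ := Real.exp (-(Real.pi ^ 2 * T₁)) with hr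
  have hr0 : 0 < r := Real.exp_pos _
  have hr1 : r < 1 := by
    rw [hr]; exact Real.exp_lt_one_iff.2 (neg_lt_zero.2 (by positivity))
  have hS : Summable (fun n : ℕ => 2 * Real.pi * (((n:ℝ) + 1) * r ^ n)) := by
    apply Summable.mul_left
    have h1 : Summable (fun n : ℕ => ((n:ℝ)) ^ 1 * r ^ n) :=
      summable_pow_mul_geometric_of_norm_lt_one 1 (by rw [Real.norm_eq_abs, abs_of_pos hr0]; exact hr1)
    have h2 : Summable (fun n : ℕ => r ^ n) := summable_geometric_of_lt_one hr0.le hr1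
    simpa [add_mul, pow_one] using h1.add h2
  apply Summable.of_nonneg_of_le _ _ hS
  · intro n; unfold nhkCoef; positivity
  · intro n
    unfold nhkCoef
    have hb := nhk_exp_le T₁ T₁ hT₁ le_rfl n
    have hrn : r ^ (n + 1) ≤ r ^ n * 1 := by
      rw [pow_succ]; exact mul_le_mul_of_nonneg_left hr1.le (by positivity)
    have hc : (0:ℝ) ≤ 2 * (((n : ℝ) + 1) * Real.pi) := by positivity
    calc 2 * (((n : ℝ) + 1) * Real.pi) * Real.exp (-(((n : ℝ) + 1) ^ 2) * Real.pi ^ 2 * T₁)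
        ≤ 2 * (((n : ℝ) + 1) * Real.pi) * r ^ (n+1) := mul_le_mul_of_nonneg_left (by rw [hr]; exact hb) hc
      _ ≤ 2 * (((n : ℝ) + 1) * Real.pi) * r ^ n := by
          apply mul_le_mul_of_nonneg_left _ hc; simpa using hrn
      _ = 2 * Real.pi * (((n:ℝ) + 1) * r ^ n) := by ring

lemma min_one_le_sqrt {u : ℝ} (hu : 0 ≤ u) : min 1 u ≤ Real.sqrt u := by
  rcases le_total u 1 with h | h
  · rw [min_eq_right h]
    have : Real.sqrt (u ^ 2) ≤ Real.sqrt u := Real.sqrt_le_sqrt (by nlinarith)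
    rwa [Real.sqrt_sq hu] at this
  · rw [min_eq_left h]
    have : Real.sqrt 1 ≤ Real.sqrt u := Real.sqrt_le_sqrt h
    simpa using this

lemma exp_diff_aux {L T₁ s t : ℝ} (hL : 0 ≤ L) (hs : T₁ ≤ s) (hst : s ≤ t) :
    Real.exp (-(L * s)) - Real.exp (-(L * t)) ≤
      Real.exp (-(L * T₁)) * Real.sqrt (L * (t - s)) := by
  have hu : (0:ℝ) ≤ L * (t - s) := by nlinarith
  have h1 : 1 - Real.exp (-(L * (t - s))) ≤ min 1 (L * (t - s)) := by
    refine le_min ?_ ?_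
    · have := Real.exp_pos (-(L * (t - s))); linarith
    · have := Real.add_one_le_exp (-(L * (t - s))); linarith
  have h2 : 1 - Real.exp (-(L * (t - s))) ≤ Real.sqrt (L * (t - s)) :=
    h1.trans (min_one_le_sqrt hu)
  have h3 : Real.exp (-(L * s)) ≤ Real.exp (-(L * T₁)) :=
    Real.exp_le_exp.2 (by nlinarith)
  have key : Real.exp (-(L * s)) - Real.exp (-(L * t)) =
      Real.exp (-(L * s)) * (1 - Real.exp (-(L * (t - s)))) := by
    rw [mul_sub, mul_one, ← Real.exp_add]; ring_nf
  rw [key]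
  have hnn : 0 ≤ 1 - Real.exp (-(L * (t - s))) := by
    have : Real.exp (-(L * (t - s))) ≤ 1 := Real.exp_le_one_iff.2 (by linarith)
    linarith
  exact mul_le_mul h3 h2 hnn (Real.exp_pos _).le

lemma exp_diff_abs {L T₁ s t : ℝ} (hL : 0 ≤ L) (hs : T₁ ≤ s) (ht : T₁ ≤ t) :
    |Real.exp (-(L * t)) - Real.exp (-(L * s))| ≤
      Real.exp (-(L * T₁)) * Real.sqrt (L * |t - s|) := by
  rcases le_total s t with h | h
  · rw [abs_of_nonpos (by have := Real.exp_le_exp.2 (by nlinarith : -(L*t) ≤ -(L*s)); linarith),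
      abs_of_nonneg (by linarith : (0:ℝ) ≤ t - s)]
    have := exp_diff_aux hL hs h
    linarith
  · rw [abs_of_nonneg (by have := Real.exp_le_exp.2 (by nlinarith : -(L*s) ≤ -(L*t)); linarith),
      abs_of_nonpos (by linarith : t - s ≤ 0)]
    have := exp_diff_aux hL ht h
    have he : -(t - s) = s - t := by ring
    rw [he]
    linarith


lemma term_summable (τ T₁ x ξ : ℝ) (hT₁ : 0 < T₁) (hτ : T₁ ≤ τ) :
    Summable (fun n : ℕ => 2 * Real.exp (-((n + 1 : ℝ) ^ 2) * Real.pi ^ 2 * τ) *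
      Real.cos ((n + 1 : ℝ) * Real.pi * x) * Real.cos ((n + 1 : ℝ) * Real.pi * ξ)) := by
  set r : ℝ := Real.exp (-(Real.pi ^ 2 * T₁)) with hr
  have hr0 : 0 < r := Real.exp_pos _
  have hr1 : r < 1 := Real.exp_lt_one_iff.2 (neg_lt_zero.2 (by positivity))
  apply Summable.of_abs
  refine Summable.of_nonneg_of_le (fun n => abs_nonneg _) ?_
    ((summable_geometric_of_lt_one hr0.le hr1).mul_left (2 * r))
  · intro n
    have hE : (0:ℝ) < Real.exp (-((n + 1 : ℝ) ^ 2) * Real.pi ^ 2 * τ) := Real.exp_pos _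
    have h1 : |Real.cos ((n + 1 : ℝ) * Real.pi * x)| ≤ 1 := Real.abs_cos_le_one _
    have h2 : |Real.cos ((n + 1 : ℝ) * Real.pi * ξ)| ≤ 1 := Real.abs_cos_le_one _
    have hEb := nhk_exp_le τ T₁ hT₁ hτ n
    have habs : |2 * Real.exp (-((n + 1 : ℝ) ^ 2) * Real.pi ^ 2 * τ) *
        Real.cos ((n + 1 : ℝ) * Real.pi * x) * Real.cos ((n + 1 : ℝ) * Real.pi * ξ)| =
        2 * Real.exp (-((n + 1 : ℝ) ^ 2) * Real.pi ^ 2 * τ) *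
        |Real.cos ((n + 1 : ℝ) * Real.pi * x)| * |Real.cos ((n + 1 : ℝ) * Real.pi * ξ)| := by
      rw [abs_mul, abs_mul, abs_mul, abs_two, Real.abs_exp]
    rw [habs]
    have step : 2 * Real.exp (-((n + 1 : ℝ) ^ 2) * Real.pi ^ 2 * τ) *
        |Real.cos ((n + 1 : ℝ) * Real.pi * x)| * |Real.cos ((n + 1 : ℝ) * Real.pi * ξ)|
        ≤ 2 * Real.exp (-((n + 1 : ℝ) ^ 2) * Real.pi ^ 2 * τ) := by
      nlinarith [abs_nonneg (Real.cos ((n + 1 : ℝ) * Real.pi * x)),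
        abs_nonneg (Real.cos ((n + 1 : ℝ) * Real.pi * ξ)), hE.le,
        mul_le_mul h1 h2 (abs_nonneg _) zero_le_one,
        mul_nonneg (abs_nonneg (Real.cos ((n + 1 : ℝ) * Real.pi * x)))
          (abs_nonneg (Real.cos ((n + 1 : ℝ) * Real.pi * ξ)))]
    have step2 : 2 * Real.exp (-((n + 1 : ℝ) ^ 2) * Real.pi ^ 2 * τ) ≤ 2 * r * r ^ n := by
      have : r ^ (n + 1) = r * r ^ n := by rw [pow_succ]; ring
      nlinarith [hEb]
    linarith

lemma kernel_diff_bound (T₁ s t x ξ : ℝ) (hT₁ : 0 < T₁) (hs : T₁ ≤ s) (ht : T₁ ≤ t) :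
    |NeumannHeatKernel t x ξ - NeumannHeatKernel s x ξ| ≤
      (∑' n : ℕ, nhkCoef T₁ n) * Real.sqrt |t - s| := by
  have hft := term_summable t T₁ x ξ hT₁ ht
  have hfs := term_summable s T₁ x ξ hT₁ hs
  set g : ℕ → ℝ := fun n =>
    2 * Real.exp (-((n + 1 : ℝ) ^ 2) * Real.pi ^ 2 * t) *
      Real.cos ((n + 1 : ℝ) * Real.pi * x) * Real.cos ((n + 1 : ℝ) * Real.pi * ξ) -
    2 * Real.exp (-((n + 1 : ℝ) ^ 2) * Real.pi ^ 2 * s) *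
      Real.cos ((n + 1 : ℝ) * Real.pi * x) * Real.cos ((n + 1 : ℝ) * Real.pi * ξ) with hgdef
  have heq : NeumannHeatKernel t x ξ - NeumannHeatKernel s x ξ = ∑' n, g n := by
    unfold NeumannHeatKernel
    rw [hgdef, Summable.tsum_sub hft hfs]
    ring
  have hg : ∀ n : ℕ, |g n| ≤ nhkCoef T₁ n * Real.sqrt |t - s| := by
    intro n
    set L : ℝ := ((n : ℝ) + 1) ^ 2 * Real.pi ^ 2 with hL
    have hL0 : (0:ℝ) ≤ L := by rw [hL]; positivity
    have hEd := exp_diff_abs (L := L) (T₁ := T₁) (s := s) (t := t) hL0 hs ht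
    have hrw : ∀ τ : ℝ, -((n + 1 : ℝ) ^ 2) * Real.pi ^ 2 * τ = -(L * τ) := by
      intro τ; rw [hL]; ring
    have hgform : g n = 2 * (Real.exp (-(L * t)) - Real.exp (-(L * s))) *
        Real.cos ((n + 1 : ℝ) * Real.pi * x) * Real.cos ((n + 1 : ℝ) * Real.pi * ξ) := by
      rw [hgdef]; simp only []; rw [hrw t, hrw s]; ring
    have h1 : |Real.cos ((n + 1 : ℝ) * Real.pi * x)| ≤ 1 := Real.abs_cos_le_one _
    have h2 : |Real.cos ((n + 1 : ℝ) * Real.pi * ξ)| ≤ 1 := Real.abs_cos_le_one _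
    have habs : |g n| = 2 * |Real.exp (-(L * t)) - Real.exp (-(L * s))| *
        |Real.cos ((n + 1 : ℝ) * Real.pi * x)| * |Real.cos ((n + 1 : ℝ) * Real.pi * ξ)| := by
      rw [hgform, abs_mul, abs_mul, abs_mul, abs_two]
    have hstep : |g n| ≤ 2 * |Real.exp (-(L * t)) - Real.exp (-(L * s))| := by
      rw [habs]
      nlinarith [abs_nonneg (Real.exp (-(L * t)) - Real.exp (-(L * s))),
        abs_nonneg (Real.cos ((n + 1 : ℝ) * Real.pi * x)),
        abs_nonneg (Real.cos ((n + 1 : ℝ) * Real.pi * ξ)),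
        mul_le_mul h1 h2 (abs_nonneg _) zero_le_one,
        mul_nonneg (abs_nonneg (Real.cos ((n + 1 : ℝ) * Real.pi * x)))
          (abs_nonneg (Real.cos ((n + 1 : ℝ) * Real.pi * ξ)))]
    have hsqrtL : Real.sqrt (L * |t - s|) = (((n : ℝ) + 1) * Real.pi) * Real.sqrt |t - s| := by
      have : L = (((n : ℝ) + 1) * Real.pi) ^ 2 := by rw [hL]; ring
      rw [this, Real.sqrt_mul (by positivity), Real.sqrt_sq (by positivity)]
    have hfinal : 2 * |Real.exp (-(L * t)) - Real.exp (-(L * s))| ≤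
        nhkCoef T₁ n * Real.sqrt |t - s| := by
      have h3 : 2 * |Real.exp (-(L * t)) - Real.exp (-(L * s))| ≤
          2 * (Real.exp (-(L * T₁)) * Real.sqrt (L * |t - s|)) := by linarith
      have h4 : nhkCoef T₁ n * Real.sqrt |t - s| =
          2 * (Real.exp (-(L * T₁)) * ((((n : ℝ) + 1) * Real.pi) * Real.sqrt |t - s|)) := by
        unfold nhkCoef
        rw [hrw T₁]
        ring
      rw [h4, ← hsqrtL]
      linarith
    linarith
  have hb : Summable (fun n : ℕ => nhkCoef T₁ n * Real.sqrt |t - s|) :=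
    (nhkCoef_summable T₁ hT₁).mul_right _
  have hgabs : Summable (fun n : ℕ => |g n|) :=
    Summable.of_nonneg_of_le (fun n => abs_nonneg _) hg hb
  rw [heq]
  calc |∑' n, g n| ≤ ∑' n, |g n| := by
        simpa [Real.norm_eq_abs] using norm_tsum_le_tsum_norm (f := g) (by simpa [Real.norm_eq_abs] using hgabs)
    _ ≤ ∑' n, nhkCoef T₁ n * Real.sqrt |t - s| := Summable.tsum_le_tsum hg hgabs hb
    _ = (∑' n : ℕ, nhkCoef T₁ n) * Real.sqrt |t - s| := tsum_mul_right

theorem stmt_4 (T₁ T₂ : ℝ) (hT₁ : 0 < T₁) (hT : T₁ < T₂) :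
    ∃ C > 0, ∀ s ∈ Set.Icc T₁ T₂, ∀ t ∈ Set.Icc T₁ T₂, ∀ x ∈ Set.Icc (0:ℝ) 1,
      ∫ ξ in (0:ℝ)..1, (NeumannHeatKernel t x ξ - NeumannHeatKernel s x ξ) ^ 2 ≤
        C * |t - s| ^ ((1:ℝ)/2) := by
  set S : ℝ := ∑' n : ℕ, nhkCoef T₁ n with hSdef
  have hS0 : 0 ≤ S := tsum_nonneg (fun n => by unfold nhkCoef; positivity)
  refine ⟨max 1 (S ^ 2 * Real.sqrt (T₂ - T₁)), lt_of_lt_of_le one_pos (le_max_left _ _), ?_⟩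
  intro s hs t ht x hx
  have hbound : ∀ ξ ∈ Set.uIoc (0:ℝ) 1,
      ‖(NeumannHeatKernel t x ξ - NeumannHeatKernel s x ξ) ^ 2‖ ≤
        (S * Real.sqrt |t - s|) ^ 2 := by
    intro ξ _
    have hk := kernel_diff_bound T₁ s t x ξ hT₁ hs.1 ht.1
    rw [Real.norm_eq_abs, abs_of_nonneg (sq_nonneg _), ← sq_abs]
    exact pow_le_pow_left₀ (abs_nonneg _) hk 2
  have hint := intervalIntegral.norm_integral_le_of_norm_le_const hbound
  have habs_ts : |t - s| ≤ T₂ - T₁ :=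
    abs_le.2 ⟨by linarith [hs.1, hs.2, ht.1, ht.2], by linarith [hs.1, hs.2, ht.1, ht.2]⟩
  have hsq : (S * Real.sqrt |t - s|) ^ 2 = S ^ 2 * (Real.sqrt |t - s| * Real.sqrt |t - s|) := by
    ring
  calc ∫ ξ in (0:ℝ)..1, (NeumannHeatKernel t x ξ - NeumannHeatKernel s x ξ) ^ 2
      ≤ ‖∫ ξ in (0:ℝ)..1, (NeumannHeatKernel t x ξ - NeumannHeatKernel s x ξ) ^ 2‖ :=
        le_abs_self _
    _ ≤ (S * Real.sqrt |t - s|) ^ 2 * |1 - 0| := hint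
    _ = S ^ 2 * Real.sqrt |t - s| * Real.sqrt |t - s| := by
        rw [show |(1:ℝ) - 0| = 1 by norm_num, mul_one, hsq]; ring
    _ ≤ S ^ 2 * Real.sqrt (T₂ - T₁) * Real.sqrt |t - s| := by
        apply mul_le_mul_of_nonneg_right _ (Real.sqrt_nonneg _)
        exact mul_le_mul_of_nonneg_left (Real.sqrt_le_sqrt habs_ts) (by positivity)
    _ ≤ max 1 (S ^ 2 * Real.sqrt (T₂ - T₁)) * Real.sqrt |t - s| :=
        mul_le_mul_of_nonneg_right (le_max_right _ _) (Real.sqrt_nonneg _)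
    _ = max 1 (S ^ 2 * Real.sqrt (T₂ - T₁)) * |t - s| ^ ((1:ℝ)/2) := by
        rw [Real.sqrt_eq_rpow |t - s|]
end
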